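/- Let x ∈ L²(Ω, ℝ^m), z ∈ L²(Ω, ℝ^q) and S ∈ ℝ^{m×q}. Then ‖x − S z‖²_Ω = ‖E_{xx}^{1/2}‖² − ‖E_{xz}(E_{zz}^{1/2})^†‖² + ‖S E_{zz}^{1/2} − E_{xz}(E_{zz}^{1/2})^†‖², where ‖·‖ is the Frobenius norm. -/

import Mathlib

open MeasureTheory Matrix Finset Filter

noncomputable section

/-- The covariance matrix `E_{xy}` of two random vectors. -/
def covM {Ω : Type} [MeasurableSpace Ω] (μ : Measure Ω) {m n : ℕ}
    (x : Ω → Fin m → ℝ) (y : Ω → Fin n → ℝ) : Matrix (Fin m) (Fin n) ℝ :=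
  Matrix.of fun i j => ∫ ω, x ω i * y ω j ∂μ

/-- The squared norm `‖x‖²_Ω` of a random vector. -/
def sqnormOm {Ω : Type} [MeasurableSpace Ω] (μ : Measure Ω) {m : ℕ}
    (x : Ω → Fin m → ℝ) : ℝ :=
  ∫ ω, ∑ j, (x ω j) ^ 2 ∂μ

/-- The Moore–Penrose conditions. -/
def IsMoorePenrose {m n : ℕ} (A : Matrix (Fin m) (Fin n) ℝ)
    (B : Matrix (Fin n) (Fin m) ℝ) : Prop :=
  A * B * A = A ∧ B * A * B = B ∧ (A * B)ᵀ = A * B ∧ (B * A)ᵀ = B * A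

/-- The Moore–Penrose pseudoinverse `M^†`. -/
def mpinv {m n : ℕ} (A : Matrix (Fin m) (Fin n) ℝ) : Matrix (Fin n) (Fin m) ℝ :=
  Classical.epsilon fun B => IsMoorePenrose A B

/-- The symmetric positive semidefinite square root `M^{1/2}` of a PSD matrix. -/
def msqrtM {n : ℕ} (M : Matrix (Fin n) (Fin n) ℝ) : Matrix (Fin n) (Fin n) ℝ :=
  Classical.epsilon fun S => S.PosSemidef ∧ S * S = M

/-- Squared Frobenius norm. -/
def frobSq {m n : ℕ} (A : Matrix (Fin m) (Fin n) ℝ) : ℝ := ∑ i, ∑ j, (A i j) ^ 2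

/-- `(u, v, σ)` is a singular value decomposition of `A`:
`A = ∑ k σ_k u_k v_kᵀ` with orthonormal `u`'s and `v`'s and
nonnegative singular values in decreasing order. -/
def IsSVDOf {m n : ℕ} (A : Matrix (Fin m) (Fin n) ℝ)
    (u : ℕ → Fin m → ℝ) (v : ℕ → Fin n → ℝ) (σ : ℕ → ℝ) : Prop :=
  (∀ k l, k < min m n → l < min m n → u k ⬝ᵥ u l = if k = l then (1 : ℝ) else 0) ∧
  (∀ k l, k < min m n → l < min m n → v k ⬝ᵥ v l = if k = l then (1 : ℝ) else 0) ∧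
  (∀ k, 0 ≤ σ k) ∧ Antitone σ ∧ (∀ k, min m n ≤ k → σ k = 0) ∧
  A = ∑ k ∈ Finset.range (min m n), σ k • vecMulVec (u k) (v k)


/-!
Expanding the square, `‖x − S z‖²_Ω = tr E_xx − 2 tr (E_xz Sᵀ) + tr (S E_zz Sᵀ)`, and with
`R = E_zz^{1/2}` and `B = R^†` the right-hand side expands to the same expression as soon as
`E_xz B R = E_xz`. This holds because `1 − B R` is annihilated by `R`, hence by `E_zz = R R`;
and whenever `E_zz N = 0`, the random vector `Nᵀ z` has vanishing second moments, so it is zero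
almost everywhere and `E_xz N = E_{x, Nᵀ z} = 0`.
-/

theorem frobSq_eq_trace_mul_transpose {m n : ℕ} (A : Matrix (Fin m) (Fin n) ℝ) :
    frobSq A = trace (A * Aᵀ) := by
  simp [frobSq, trace, mul_apply, sq]

theorem frobSq_mul_sub_mul {m n : ℕ} {S C : Matrix (Fin m) (Fin n) ℝ}
    {R B : Matrix (Fin n) (Fin n) ℝ} (hR : Rᵀ = R) (hC : C * B * R = C) :
    frobSq (S * R - C * B)
      = trace (S * (R * R) * Sᵀ) - 2 * trace (C * Sᵀ) + frobSq (C * B) := by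
  have hcross : trace (C * B * (S * R)ᵀ) = trace (C * Sᵀ) := by
    rw [transpose_mul, hR, ← Matrix.mul_assoc, hC]
  have hcross' : trace (S * R * (C * B)ᵀ) = trace (C * Sᵀ) := by
    rw [← trace_transpose, transpose_mul, transpose_transpose, hcross]
  rw [frobSq_eq_trace_mul_transpose, frobSq_eq_trace_mul_transpose, transpose_sub,
    Matrix.sub_mul, Matrix.mul_sub, Matrix.mul_sub, trace_sub, trace_sub, trace_sub, hcross,
    hcross', transpose_mul, hR]
  simp only [Matrix.mul_assoc]
  ring

/-- Since `0⁻¹ = 0` in `ℝ`, the function `t ↦ t⁻¹` satisfies the Moore–Penrose identities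
pointwise, so the functional calculus transports them to `A`. -/
theorem Matrix.IsHermitian.isMoorePenrose_cfc_inv {n : ℕ} {A : Matrix (Fin n) (Fin n) ℝ}
    (hA : A.IsHermitian) : IsMoorePenrose A (cfc (fun t : ℝ => t⁻¹) A) := by
  have hid : cfc (id : ℝ → ℝ) A = A := cfc_id ℝ A hA
  have hmul (f g : ℝ → ℝ) : cfc f A * cfc g A = cfc (fun t => f t * g t) A :=
    (cfc_mul f g A (A.finite_real_spectrum.continuousOn f)
      (A.finite_real_spectrum.continuousOn g)).symm
  have hsymm (f : ℝ → ℝ) : (cfc f A)ᵀ = cfc f A := (IsSelfAdjoint.cfc (R := ℝ)).star_eq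
  have hsandwich (f g : ℝ → ℝ) (hfg : ∀ t, f t * g t * f t = f t) :
      cfc f A * cfc g A * cfc f A = cfc f A := by
    rw [hmul, hmul]
    exact congrArg (cfc · A) (funext hfg)
  have hAinvA := hsandwich id (·⁻¹) fun t => mul_inv_mul_cancel t
  have hinvAinv := hsandwich (·⁻¹) id fun t => by simpa using mul_inv_mul_cancel t⁻¹
  have hAinv := hsymm fun t => id t * t⁻¹
  have hinvA := hsymm fun t => t⁻¹ * id t
  rw [← hmul, hid] at hAinv hinvA
  rw [hid] at hAinvA hinvAinv
  exact ⟨hAinvA, hinvAinv, hAinv, hinvA⟩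

theorem isMoorePenrose_mpinv_of_isHermitian {n : ℕ} {A : Matrix (Fin n) (Fin n) ℝ}
    (hA : A.IsHermitian) : IsMoorePenrose A (mpinv A) :=
  Classical.epsilon_spec ⟨_, hA.isMoorePenrose_cfc_inv⟩

open scoped MatrixOrder in
theorem msqrtM_spec {n : ℕ} {M : Matrix (Fin n) (Fin n) ℝ} (hM : M.PosSemidef) :
    (msqrtM M).PosSemidef ∧ msqrtM M * msqrtM M = M :=
  Classical.epsilon_spec (p := fun S : Matrix (Fin n) (Fin n) ℝ => S.PosSemidef ∧ S * S = M)
    ⟨CFC.sqrt M, (CFC.sqrt_nonneg M).posSemidef, CFC.sqrt_mul_sqrt_self M hM.nonneg⟩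

section Covariance

variable {Ω : Type} [MeasurableSpace Ω] {μ : Measure Ω}

theorem MeasureTheory.MemLp.integrable_mul_apply {m n : ℕ} {x : Ω → Fin m → ℝ}
    {y : Ω → Fin n → ℝ} (hx : MemLp x 2 μ) (hy : MemLp y 2 μ) (i : Fin m) (j : Fin n) :
    Integrable (fun ω => x ω i * y ω j) μ :=
  (hx.eval i).integrable_mul (hy.eval j)

theorem MeasureTheory.MemLp.mulVec {m n : ℕ} {x : Ω → Fin n → ℝ} (hx : MemLp x 2 μ)
    (A : Matrix (Fin m) (Fin n) ℝ) : MemLp (fun ω => A *ᵥ x ω) 2 μ :=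
  hx.continuousLinearMap_comp (Matrix.mulVecLin A).toContinuousLinearMap

theorem covM_transpose {m n : ℕ} (x : Ω → Fin m → ℝ) (y : Ω → Fin n → ℝ) :
    (covM μ x y)ᵀ = covM μ y x := by
  ext i j
  simp only [covM, transpose_apply, of_apply, mul_comm]

theorem covM_sub_left {m n : ℕ} {x y : Ω → Fin m → ℝ} {w : Ω → Fin n → ℝ}
    (hx : MemLp x 2 μ) (hy : MemLp y 2 μ) (hw : MemLp w 2 μ) :
    covM μ (fun ω => x ω - y ω) w = covM μ x w - covM μ y w := by
  ext i j
  simp only [covM, of_apply, Matrix.sub_apply, Pi.sub_apply, sub_mul]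
  exact integral_sub (hx.integrable_mul_apply hw i j) (hy.integrable_mul_apply hw i j)

theorem covM_sub_right {m n : ℕ} {w : Ω → Fin m → ℝ} {x y : Ω → Fin n → ℝ}
    (hw : MemLp w 2 μ) (hx : MemLp x 2 μ) (hy : MemLp y 2 μ) :
    covM μ w (fun ω => x ω - y ω) = covM μ w x - covM μ w y := by
  rw [← transpose_inj, transpose_sub, covM_transpose, covM_transpose, covM_transpose,
    covM_sub_left hx hy hw]

theorem covM_mulVec_left {k m n : ℕ} {x : Ω → Fin m → ℝ} {y : Ω → Fin n → ℝ}
    (hx : MemLp x 2 μ) (hy : MemLp y 2 μ) (A : Matrix (Fin k) (Fin m) ℝ) :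
    covM μ (fun ω => A *ᵥ x ω) y = A * covM μ x y := by
  ext i j
  simp only [covM, of_apply, mul_apply, mulVec, dotProduct, Finset.sum_mul, mul_assoc]
  rw [integral_finsetSum _ fun l _ => (hx.integrable_mul_apply hy l j).const_mul (A i l)]
  simp only [integral_const_mul]

theorem covM_mulVec_right {k m n : ℕ} {x : Ω → Fin m → ℝ} {y : Ω → Fin n → ℝ}
    (hx : MemLp x 2 μ) (hy : MemLp y 2 μ) (A : Matrix (Fin k) (Fin n) ℝ) :
    covM μ x (fun ω => A *ᵥ y ω) = covM μ x y * Aᵀ := by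
  rw [← transpose_inj, transpose_mul, transpose_transpose, covM_transpose, covM_transpose,
    covM_mulVec_left hy hx]

theorem sqnormOm_eq_trace_covM {m : ℕ} {x : Ω → Fin m → ℝ} (hx : MemLp x 2 μ) :
    sqnormOm μ x = trace (covM μ x x) := by
  rw [sqnormOm, integral_finsetSum _ fun i _ => (hx.eval i).integrable_sq]
  simp [trace, covM, sq]

theorem covM_eq_zero_of_covM_self_eq_zero {m n : ℕ} (x : Ω → Fin m → ℝ) {w : Ω → Fin n → ℝ}
    (hw : MemLp w 2 μ) (hww : covM μ w w = 0) : covM μ x w = 0 := by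
  ext i j
  have hwj : ∫ ω, w ω j ^ 2 ∂μ = 0 := by simpa [covM, sq] using congrFun (congrFun hww j) j
  have hwj_ae : ∀ᵐ ω ∂μ, w ω j = 0 := by
    filter_upwards [(integral_eq_zero_iff_of_nonneg (fun ω => sq_nonneg (w ω j))
      (hw.eval j).integrable_sq).mp hwj] with ω hω
    simpa using hω
  simp only [covM, of_apply, Matrix.zero_apply]
  exact integral_eq_zero_of_ae (by filter_upwards [hwj_ae] with ω hω; simp [hω])

theorem covM_mul_eq_zero_of_covM_self_mul_eq_zero {m n k : ℕ} {x : Ω → Fin m → ℝ}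
    {z : Ω → Fin n → ℝ} (hx : MemLp x 2 μ) (hz : MemLp z 2 μ) {N : Matrix (Fin n) (Fin k) ℝ}
    (hN : covM μ z z * N = 0) : covM μ x z * N = 0 := by
  have hNz := hz.mulVec Nᵀ
  have hself : covM μ (fun ω => Nᵀ *ᵥ z ω) (fun ω => Nᵀ *ᵥ z ω) = 0 := by
    rw [covM_mulVec_left hz hNz, covM_mulVec_right hz hz, transpose_transpose, hN,
      Matrix.mul_zero]
  simpa [covM_mulVec_right hx hz] using covM_eq_zero_of_covM_self_eq_zero x hNz hself

theorem covM_sub_mulVec_self {m n : ℕ} {x : Ω → Fin m → ℝ} {z : Ω → Fin n → ℝ}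
    (hx : MemLp x 2 μ) (hz : MemLp z 2 μ) (S : Matrix (Fin m) (Fin n) ℝ) :
    covM μ (fun ω => x ω - S *ᵥ z ω) (fun ω => x ω - S *ᵥ z ω)
      = covM μ x x - covM μ x z * Sᵀ - (covM μ x z * Sᵀ)ᵀ + S * covM μ z z * Sᵀ := by
  have hSz := hz.mulVec S
  have hxSz : MemLp (fun ω => x ω - S *ᵥ z ω) 2 μ := hx.sub hSz
  rw [covM_sub_left hx hSz hxSz, covM_sub_right hx hx hSz,
    covM_sub_right hSz hx hSz, covM_mulVec_right hx hz, covM_mulVec_left hz hx,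
    covM_mulVec_left hz hSz, covM_mulVec_right hz hz, transpose_mul, transpose_transpose,
    covM_transpose, Matrix.mul_assoc]
  abel

theorem covM_self_posSemidef {n : ℕ} {z : Ω → Fin n → ℝ} (hz : MemLp z 2 μ) :
    (covM μ z z).PosSemidef := by
  refine posSemidef_iff_dotProduct_mulVec.mpr ⟨covM_transpose z z, fun v => ?_⟩
  set N := replicateCol (Fin 1) v
  have hNz := hz.mulVec Nᵀ
  have h : star v ⬝ᵥ (covM μ z z *ᵥ v) = sqnormOm μ (fun ω => Nᵀ *ᵥ z ω) := by
    rw [sqnormOm_eq_trace_covM hNz, covM_mulVec_left hz hNz, covM_mulVec_right hz hz,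
      transpose_transpose]
    simp [N, trace, dotProduct, mulVec, mul_apply, Finset.mul_sum]
  rw [h]
  exact integral_nonneg fun ω => Finset.sum_nonneg fun j _ => sq_nonneg _

end Covariance

theorem stmt4_general {Ω : Type} [MeasurableSpace Ω] (μ : Measure Ω)
    {m q : ℕ} (x : Ω → Fin m → ℝ) (z : Ω → Fin q → ℝ)
    (hx : MemLp x 2 μ) (hz : MemLp z 2 μ)
    (S : Matrix (Fin m) (Fin q) ℝ) :
    sqnormOm μ (fun ω => x ω - S *ᵥ z ω)
      = frobSq (msqrtM (covM μ x x))
        - frobSq (covM μ x z * mpinv (msqrtM (covM μ z z)))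
        + frobSq (S * msqrtM (covM μ z z) - covM μ x z * mpinv (msqrtM (covM μ z z))) := by
  obtain ⟨hQ, hQQ⟩ := msqrtM_spec (covM_self_posSemidef hx)
  obtain ⟨hR, hRR⟩ := msqrtM_spec (covM_self_posSemidef hz)
  set R := msqrtM (covM μ z z)
  obtain ⟨hRBR, -, -, -⟩ := isMoorePenrose_mpinv_of_isHermitian hR.isHermitian
  set B := mpinv R
  have hkernel : covM μ z z * (1 - B * R) = 0 := by
    rw [← hRR, Matrix.mul_assoc, Matrix.mul_sub, ← Matrix.mul_assoc R B, hRBR, Matrix.mul_one,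
      sub_self, Matrix.mul_zero]
  have hC : covM μ x z * B * R = covM μ x z := by
    have h := covM_mul_eq_zero_of_covM_self_mul_eq_zero hx hz hkernel
    rw [Matrix.mul_sub, Matrix.mul_one, sub_eq_zero] at h
    rw [Matrix.mul_assoc, ← h]
  have hQsymm := (isHermitian_iff_isSymm.mp hQ.isHermitian).eq
  have hRsymm := (isHermitian_iff_isSymm.mp hR.isHermitian).eq
  have hres : MemLp (fun ω => x ω - S *ᵥ z ω) 2 μ := hx.sub (hz.mulVec S)
  rw [sqnormOm_eq_trace_covM hres, covM_sub_mulVec_self hx hz, frobSq_mul_sub_mul hRsymm hC,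
    hRR, frobSq_eq_trace_mul_transpose, hQsymm, hQQ]
  simp only [trace_add, trace_sub, trace_transpose]
  ring

/-- `‖x − Sz‖²_Ω = ‖E_{xx}^{1/2}‖² − ‖E_{xz}(E_{zz}^{1/2})^†‖²
+ ‖S E_{zz}^{1/2} − E_{xz}(E_{zz}^{1/2})^†‖²` (Frobenius norms). -/
theorem stmt4 {Ω : Type} [MeasurableSpace Ω] (μ : Measure Ω) [IsProbabilityMeasure μ]
    {m q : ℕ} (x : Ω → Fin m → ℝ) (z : Ω → Fin q → ℝ)
    (hx : MemLp x 2 μ) (hz : MemLp z 2 μ)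
    (S : Matrix (Fin m) (Fin q) ℝ) :
    sqnormOm μ (fun ω => x ω - S *ᵥ z ω)
      = frobSq (msqrtM (covM μ x x))
        - frobSq (covM μ x z * mpinv (msqrtM (covM μ z z)))
        + frobSq (S * msqrtM (covM μ z z) - covM μ x z * mpinv (msqrtM (covM μ z z))) :=
  stmt4_general μ x z hx hz S
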